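/- Let g : (X, ∂, ξ) → (Y, ∂', ξ') be a surjective morphism of precrossed B-modules of Lie algebras over a field k with kernel K = ker g. Then g maps the Peiffer commutator ⟨X, X⟩ into the Peiffer commutator ⟨Y, Y⟩; the induced map ḡ : X/⟨X, X⟩ → Y/⟨Y, Y⟩ between the quotient Lie algebras is surjective; and the kernel of ḡ equals the image of K under the quotient map X → X/⟨X, X⟩. (This is the exactness of the tail K/⟨K, X⟩ → X/⟨X, X⟩ → Y/⟨Y, Y⟩ → 0 of the five-term sequence of Lie algebra precrossed modules.) -/

import Mathlib

/-!
A morphism of precrossed modules sends Peiffer elements to Peiffer elements, so it maps the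
Peiffer commutator `⟨M, N⟩` onto `⟨g M, g N⟩`; for surjective `g` this gives `g ⟨X, X⟩ = ⟨Y, Y⟩`.
What remains holds for any surjection of Lie algebras `g` with `g I = J`: the induced map
`L ⧸ I → L' ⧸ J` is onto, and if `g x ∈ J` then `g x = g p` with `p ∈ I`, so `x ≡ x - p ∈ ker g`
modulo `I`.
-/

variable {k : Type*} [Field k]
variable {B X Y : Type*} [LieRing B] [LieAlgebra k B]
  [LieRing X] [LieAlgebra k X] [LieRing Y] [LieAlgebra k Y]

/-- `(X, δ, ξ)` is a precrossed `B`-module of Lie algebras: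
`ξ : B → Der(X)` is an action by derivations and `δ (ξ b x) = ⁅b, δ x⁆`. -/
def IsLiePrecrossedMod (δ : X →ₗ⁅k⁆ B) (ξ : B →ₗ⁅k⁆ LieDerivation k X X) : Prop :=
  ∀ (b : B) (x : X), δ (ξ b x) = ⁅b, δ x⁆

/-- A `B`-invariant set of elements of `X`. -/
def IsLieBInvariant (ξ : B →ₗ⁅k⁆ LieDerivation k X X) (M : Set X) : Prop :=
  ∀ (b : B), ∀ m ∈ M, ξ b m ∈ M

/-- The Peiffer commutator `⟨M, N⟩`: the Lie ideal of `X` generated by the Peiffer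
elements `⁅m, n⁆ - ξ (δ m) n` and `⁅n, m⁆ - ξ (δ n) m` for `m ∈ M`, `n ∈ N`. -/
def liePeiffer (δ : X →ₗ⁅k⁆ B) (ξ : B →ₗ⁅k⁆ LieDerivation k X X) (M N : Set X) :
    LieIdeal k X :=
  LieSubmodule.lieSpan k X
    ({y | ∃ m ∈ M, ∃ n ∈ N, y = ⁅m, n⁆ - ξ (δ m) n} ∪
     {y | ∃ m ∈ M, ∃ n ∈ N, y = ⁅n, m⁆ - ξ (δ n) m})

/-- `f` is a morphism of precrossed `B`-modules of Lie algebras. -/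
def IsLiePXModHom (δ : X →ₗ⁅k⁆ B) (ξ : B →ₗ⁅k⁆ LieDerivation k X X)
    (δ' : Y →ₗ⁅k⁆ B) (ξ' : B →ₗ⁅k⁆ LieDerivation k Y Y) (f : X →ₗ⁅k⁆ Y) : Prop :=
  (∀ x : X, δ' (f x) = δ x) ∧ ∀ (b : B) (x : X), f (ξ b x) = ξ' b (f x)

section LieIdealQuotient

variable {R L L' : Type*} [CommRing R] [LieRing L] [LieAlgebra R L] [LieRing L'] [LieAlgebra R L']

theorem LieIdeal.map_lieSpan (f : L →ₗ⁅R⁆ L') (s : Set L) :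
    LieIdeal.map f (LieSubmodule.lieSpan R L s) = LieSubmodule.lieSpan R L' (f '' s) := by
  refine le_antisymm ?_ ?_
  · rw [LieIdeal.map_le_iff_le_comap, LieSubmodule.lieSpan_le]
    exact fun x hx => LieSubmodule.subset_lieSpan ⟨x, hx, rfl⟩
  · rw [LieSubmodule.lieSpan_le, Set.image_subset_iff]
    exact fun x hx => LieIdeal.mem_map (LieSubmodule.subset_lieSpan hx)

def LieIdeal.mapQ (I : LieIdeal R L) (J : LieIdeal R L') (f : L →ₗ⁅R⁆ L')
    (h : I ≤ J.comap f) : L ⧸ I →ₗ⁅R⁆ L' ⧸ J :=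
  { Submodule.mapQ (I : Submodule R L) (J : Submodule R L') (f : L →ₗ[R] L') h with
    map_lie' := by
      rintro ⟨x⟩ ⟨y⟩
      exact congr_arg (LieSubmodule.Quotient.mk (N := J)) (f.map_lie x y) }

variable {I : LieIdeal R L} {J : LieIdeal R L'} {f : L →ₗ⁅R⁆ L'} {h : I ≤ J.comap f}

@[simp]
theorem LieIdeal.mapQ_mk (x : L) :
    LieIdeal.mapQ I J f h (LieSubmodule.Quotient.mk x) = LieSubmodule.Quotient.mk (f x) :=
  rfl

theorem LieIdeal.mapQ_surjective (hf : Function.Surjective f) :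
    Function.Surjective (LieIdeal.mapQ I J f h) := by
  rintro ⟨y⟩
  obtain ⟨x, rfl⟩ := hf y
  exact ⟨LieSubmodule.Quotient.mk x, rfl⟩

theorem LieIdeal.mapQ_eq_zero_iff_exists_mem_ker (hf : Function.Surjective f)
    (hJ : J ≤ I.map f) (q : L ⧸ I) :
    LieIdeal.mapQ I J f h q = 0 ↔ ∃ x ∈ f.ker, LieSubmodule.Quotient.mk x = q := by
  obtain ⟨x, rfl⟩ := Submodule.Quotient.mk_surjective (I : Submodule R L) q
  constructor
  · intro hx
    have hfx : f x ∈ J := (LieSubmodule.Quotient.mk_eq_zero' (N := J)).mp hx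
    obtain ⟨⟨p, hp⟩, hfp⟩ := LieIdeal.mem_map_of_surjective hf (hJ hfx)
    refine ⟨x - p, ?_, ?_⟩
    · simp [LieHom.mem_ker, show f p = f x from hfp]
    · exact (Submodule.Quotient.eq (I : Submodule R L)).2 (by simpa using hp)
  · rintro ⟨y, hy, hyx⟩
    rw [← hyx, LieIdeal.mapQ_mk, LieHom.mem_ker.mp hy]
    rfl

end LieIdealQuotient

section Peiffer

variable {δ : X →ₗ⁅k⁆ B} {ξ : B →ₗ⁅k⁆ LieDerivation k X X}
  {δ' : Y →ₗ⁅k⁆ B} {ξ' : B →ₗ⁅k⁆ LieDerivation k Y Y} {f : X →ₗ⁅k⁆ Y}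

theorem IsLiePXModHom.map_peiffer (hf : IsLiePXModHom δ ξ δ' ξ' f) (m n : X) :
    f (⁅m, n⁆ - ξ (δ m) n) = ⁅f m, f n⁆ - ξ' (δ' (f m)) (f n) := by
  rw [map_sub, LieHom.map_lie, hf.2, hf.1]

theorem IsLiePXModHom.map_liePeiffer (hf : IsLiePXModHom δ ξ δ' ξ' f) (M N : Set X) :
    LieIdeal.map f (liePeiffer δ ξ M N) = liePeiffer δ' ξ' (f '' M) (f '' N) := by
  rw [liePeiffer, liePeiffer, LieIdeal.map_lieSpan, Set.image_union]
  congr 2 <;> ext y <;> simp [hf.map_peiffer, and_assoc, @eq_comm _ y]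

end Peiffer

theorem lie_five_term_tail_exact_general
    (δ : X →ₗ⁅k⁆ B) (ξ : B →ₗ⁅k⁆ LieDerivation k X X)
    (δ' : Y →ₗ⁅k⁆ B) (ξ' : B →ₗ⁅k⁆ LieDerivation k Y Y)
    (g : X →ₗ⁅k⁆ Y) (hg : Function.Surjective g) (hghom : IsLiePXModHom δ ξ δ' ξ' g) :
    (∀ x ∈ liePeiffer δ ξ Set.univ Set.univ, g x ∈ liePeiffer δ' ξ' Set.univ Set.univ) ∧
    ∃ gbar : (X ⧸ liePeiffer δ ξ Set.univ Set.univ) →ₗ⁅k⁆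
        (Y ⧸ liePeiffer δ' ξ' Set.univ Set.univ),
      (∀ x : X, gbar (LieSubmodule.Quotient.mk (N := liePeiffer δ ξ Set.univ Set.univ) x) =
        LieSubmodule.Quotient.mk (N := liePeiffer δ' ξ' Set.univ Set.univ) (g x)) ∧
      Function.Surjective gbar ∧
      ∀ q : X ⧸ liePeiffer δ ξ Set.univ Set.univ,
        gbar q = 0 ↔ ∃ x ∈ g.ker,
          LieSubmodule.Quotient.mk (N := liePeiffer δ ξ Set.univ Set.univ) x = q := by
  have hmap : LieIdeal.map g (liePeiffer δ ξ Set.univ Set.univ) =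
      liePeiffer δ' ξ' Set.univ Set.univ := by
    rw [hghom.map_liePeiffer, Set.image_univ_of_surjective hg]
  have hle := LieIdeal.map_le_iff_le_comap.mp hmap.le
  exact ⟨fun x hx => hle hx, LieIdeal.mapQ _ _ g hle, LieIdeal.mapQ_mk,
    LieIdeal.mapQ_surjective hg, LieIdeal.mapQ_eq_zero_iff_exists_mem_ker hg hmap.ge⟩

/-- for a surjective morphism `g : X → Y` of precrossed `B`-modules of
Lie algebras with kernel `K = ker g`, `g` maps `⟨X, X⟩` into `⟨Y, Y⟩`, the induced map
`ḡ : X/⟨X, X⟩ → Y/⟨Y, Y⟩` is surjective, and its kernel is the image of `K` under the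
quotient map `X → X/⟨X, X⟩`. -/
theorem lie_five_term_tail_exact
    (δ : X →ₗ⁅k⁆ B) (ξ : B →ₗ⁅k⁆ LieDerivation k X X) (hpre : IsLiePrecrossedMod δ ξ)
    (δ' : Y →ₗ⁅k⁆ B) (ξ' : B →ₗ⁅k⁆ LieDerivation k Y Y) (hpre' : IsLiePrecrossedMod δ' ξ')
    (g : X →ₗ⁅k⁆ Y) (hg : Function.Surjective g) (hghom : IsLiePXModHom δ ξ δ' ξ' g) :
    (∀ x ∈ liePeiffer δ ξ Set.univ Set.univ, g x ∈ liePeiffer δ' ξ' Set.univ Set.univ) ∧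
    ∃ gbar : (X ⧸ liePeiffer δ ξ Set.univ Set.univ) →ₗ⁅k⁆
        (Y ⧸ liePeiffer δ' ξ' Set.univ Set.univ),
      (∀ x : X, gbar (LieSubmodule.Quotient.mk (N := liePeiffer δ ξ Set.univ Set.univ) x) =
        LieSubmodule.Quotient.mk (N := liePeiffer δ' ξ' Set.univ Set.univ) (g x)) ∧
      Function.Surjective gbar ∧
      ∀ q : X ⧸ liePeiffer δ ξ Set.univ Set.univ,
        gbar q = 0 ↔ ∃ x ∈ g.ker,
          LieSubmodule.Quotient.mk (N := liePeiffer δ ξ Set.univ Set.univ) x = q :=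
  lie_five_term_tail_exact_general δ ξ δ' ξ' g hg hghom
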